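/- arXiv:2205.01566 — 8 statements merged into one kernel-verified Lean document; each statement's English description precedes it below -/
import Mathlib

section
/- Let α be Levin's normal number in base 2. For every integer m ≥ 1 and every real γ with 0 ≤ γ < 1 one has |#{n_m ≤ n < n_m + 2^m·2^{2^m} : {2^n·α} ∈ [0, γ)} − γ·2^m·2^{2^m}| < 5·2^m. -/
open scoped Classical

/-- `n_m = ∑_{i=1}^{m-1} 2^i · 2^{2^i}` (so `n_1 = 0`). -/
def levinN (m : ℕ) : ℕ := ∑ i ∈ Finset.Ico 1 m, 2 ^ i * 2 ^ (2 ^ i)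

/-- The digit `d_k(n)` in block `A_m` of Levin's normal number. -/
def levinD (m k n : ℕ) : ℕ :=
  (∑ j ∈ Finset.range (2 ^ m), (Nat.choose (k + j) j % 2) * (n / 2 ^ j % 2)) % 2

/-- Levin's normal number `α` in base 2. -/
noncomputable def levinAlpha : ℝ :=
  ∑' m : ℕ, ∑ n ∈ Finset.range (2 ^ 2 ^ (m + 1)), ∑ k ∈ Finset.range (2 ^ (m + 1)),
    (levinD (m + 1) k n : ℝ) / 2 ^ (levinN (m + 1) + 2 ^ (m + 1) * n + k + 1)

open Finset

/-!
Write `M = 2^m` and `T = 2^{2^m}`. By Lucas' theorem `binom(k+j, j)` is odd iff `j &&& k = 0`, so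
`d_{M-1-c}(n)` is the parity of the bits of `n` indexed by the submasks of `c`: a unitriangular
transform of the bits of `n`. Consequently a window of `M` consecutive digits starting at offset
`k` of word `n` in block `A_m` determines `n`: its part inside word `n` determines the low
`M - k` bits of `n`, hence of `n + 1`, and its part inside word `n + 1` (the zero word of
`A_{m+1}` after the last word) then determines `n + 1`. For each `k` the window is therefore a
permutation of `[0, T)`. Since the digits of `α` are not eventually `1`, `{2^n α} < b / T` iff
the window after position `n` is `< b`, so exactly `M b` positions of the block satisfy it;
comparing `γ` with `⌊γT⌋ / T` and `(⌊γT⌋ + 1) / T` bounds the error by `2^m`.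
-/

theorem Nat.choose_add_mod_two (k j : ℕ) :
    (k + j).choose j % 2 = if j &&& k = 0 then 1 else 0 := by
  rcases Nat.eq_zero_or_pos (k + j) with h | h
  · obtain ⟨rfl, rfl⟩ : k = 0 ∧ j = 0 := by omega
    simp
  have ih := choose_add_mod_two (k / 2) (j / 2)
  have hlucas : (k + j).choose j % 2
      = ((k + j) % 2).choose (j % 2) * ((k + j) / 2).choose (j / 2) % 2 :=
    @Choose.choose_modEq_choose_mod_mul_choose_div_nat _ _ _ ⟨Nat.prime_two⟩
  have hand : j &&& k = 0 ↔ ¬ (j % 2 = 1 ∧ k % 2 = 1) ∧ j / 2 &&& k / 2 = 0 := by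
    rw [← Nat.and_mod_two_eq_one, ← Nat.and_div_two]
    omega
  have hcarry : (k + j) / 2 = k / 2 + j / 2 ∨ (j % 2 = 1 ∧ k % 2 = 1) := by omega
  simp only [hlucas, hand]
  rcases Nat.mod_two_eq_zero_or_one j with hj | hj <;>
    rcases Nat.mod_two_eq_zero_or_one k with hk | hk <;>
    simp_all [show (k + j) % 2 = (k % 2 + j % 2) % 2 by omega]
termination_by k + j

theorem Nat.and_two_pow_sub_succ_eq_zero_iff {m c j : ℕ} (hc : c < 2 ^ m) (hj : j < 2 ^ m) :
    j &&& (2 ^ m - (c + 1)) = 0 ↔ j &&& c = j := by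
  have hjm : ∀ i, j.testBit i → i < m := fun i hi =>
    (Nat.pow_lt_pow_iff_right (by norm_num)).mp ((Nat.ge_two_pow_of_testBit hi).trans_lt hj)
  constructor <;> intro h <;> refine Nat.eq_of_testBit_eq fun i => ?_ <;>
  · have := congrArg (·.testBit i) h
    simp only [Nat.testBit_and, Nat.testBit_two_pow_sub_succ hc, Nat.zero_testBit] at this ⊢
    cases hji : j.testBit i <;> simp_all

theorem Nat.mod_two_pow_div_two_pow_mod_two {n t i : ℕ} (hi : i < t) :
    n % 2 ^ t / 2 ^ i % 2 = n / 2 ^ i % 2 := by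
  rw [← Nat.toNat_testBit, ← Nat.toNat_testBit, Nat.testBit_mod_two_pow]
  simp [hi]

/-- The number with binary digits `d 0, …, d (L - 1)`, most significant first. -/
def ofBits (d : ℕ → ℕ) (L : ℕ) : ℕ := ∑ j ∈ range L, d j * 2 ^ (L - 1 - j)

theorem ofBits_succ (d : ℕ → ℕ) (L : ℕ) :
    ofBits d (L + 1) = d 0 * 2 ^ L + ofBits (fun j => d (j + 1)) L := by
  rw [ofBits, sum_range_succ', add_comm, ofBits]
  congr 1
  exact sum_congr rfl fun j hj => by rw [show L + 1 - 1 - (j + 1) = L - 1 - j by omega]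

theorem ofBits_lt {d : ℕ → ℕ} {L : ℕ} (hd : ∀ j < L, d j ≤ 1) : ofBits d L < 2 ^ L := by
  induction L generalizing d with
  | zero => simp [ofBits]
  | succ L ih =>
    have := ih fun j hj => hd (j + 1) (by omega)
    rw [ofBits_succ, pow_succ]
    rcases Nat.le_one_iff_eq_zero_or_eq_one.mp (hd 0 (by omega)) with h | h <;> rw [h] <;> omega

theorem eq_of_ofBits_eq {d e : ℕ → ℕ} {L : ℕ} (hd : ∀ j < L, d j ≤ 1)
    (he : ∀ j < L, e j ≤ 1) (h : ofBits d L = ofBits e L) : ∀ j < L, d j = e j := by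
  induction L generalizing d e with
  | zero => simp
  | succ L ih =>
    have hd' := ofBits_lt (L := L) (d := fun j => d (j + 1)) fun j hj => hd (j + 1) (by omega)
    have he' := ofBits_lt (L := L) (d := fun j => e (j + 1)) fun j hj => he (j + 1) (by omega)
    rw [ofBits_succ, ofBits_succ] at h
    have h0 : d 0 = e 0 := by
      rcases Nat.le_one_iff_eq_zero_or_eq_one.mp (hd 0 (by omega)) with h1 | h1 <;>
      rcases Nat.le_one_iff_eq_zero_or_eq_one.mp (he 0 (by omega)) with h2 | h2 <;>
      rw [h1, h2] at h ⊢ <;> omega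
    have htail := ih (fun j hj => hd (j + 1) (by omega)) (fun j hj => he (j + 1) (by omega))
      (by rw [h0] at h; omega)
    rintro (_ | j) hj
    · exact h0
    · exact htail j (by omega)

theorem Finset.sum_range_mul {M : Type*} [AddCommMonoid M] (f : ℕ → M) (a b : ℕ) :
    ∑ q ∈ range (a * b), f q = ∑ n ∈ range b, ∑ k ∈ range a, f (a * n + k) := by
  induction b with
  | zero => simp
  | succ b ih => rw [Nat.mul_succ, sum_range_add, ih, sum_range_succ]

section BinaryExpansion

variable {a : ℕ → ℕ} {x : ℝ}

theorem summable_digit_div_two_pow {d : ℕ → ℕ} (hd : ∀ j, d j ≤ 1) (s : ℕ) :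
    Summable fun j => (d j : ℝ) / 2 ^ (j + s) := by
  refine summable_geometric_two.of_nonneg_of_le (fun j => by positivity) fun j => ?_
  rw [one_div_pow]
  gcongr
  · exact_mod_cast hd j
  · norm_num
  · omega

noncomputable def binaryTail (a : ℕ → ℕ) (n : ℕ) : ℝ :=
  ∑' j, (a (n + 1 + j) : ℝ) / 2 ^ (j + 1)

theorem binaryTail_nonneg (n : ℕ) : 0 ≤ binaryTail a n :=
  tsum_nonneg fun _ => by positivity

theorem two_mul_binaryTail (ha : ∀ p, a p ≤ 1) (n : ℕ) :
    2 * binaryTail a n = a (n + 1) + binaryTail a (n + 1) := by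
  rw [binaryTail, (summable_digit_div_two_pow (fun j => ha _) 1).tsum_eq_zero_add, binaryTail,
    mul_add, ← tsum_mul_left]
  congr 1
  · simp [mul_div_cancel₀]
  · refine tsum_congr fun j => ?_
    rw [show n + 1 + (j + 1) = n + 1 + 1 + j by omega, pow_succ]
    field_simp

theorem binaryTail_lt_one (ha : ∀ p, a p ≤ 1) {n j₀ : ℕ} (hj₀ : a (n + 1 + j₀) = 0) :
    binaryTail a n < 1 := by
  have hle : ∀ j, (a (n + 1 + j) : ℝ) / 2 ^ (j + 1) ≤ 1 / 2 / 2 ^ j := fun j => by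
    rw [div_div, ← pow_succ']
    gcongr
    exact_mod_cast ha _
  calc binaryTail a n < ∑' j : ℕ, 1 / 2 / 2 ^ j :=
        Summable.tsum_lt_tsum (i := j₀) hle (by simp [hj₀])
          (summable_digit_div_two_pow (fun j => ha _) 1)
          (summable_geometric_two.mul_left (1 / 2) |>.congr fun j => by rw [one_div_pow]; ring)
    _ = 1 := tsum_geometric_two' 1

theorem binaryTail_eq_ofBits_add (ha : ∀ p, a p ≤ 1) (L n : ℕ) :
    binaryTail a n = (ofBits (fun j => a (n + 1 + j)) L + binaryTail a (n + L)) / 2 ^ L := by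
  induction L generalizing n with
  | zero => simp [ofBits]
  | succ L ih =>
    have hstep := two_mul_binaryTail ha n
    rw [ih (n + 1), show n + 1 + L = n + (L + 1) by omega] at hstep
    rw [ofBits_succ, show (fun j => a (n + 1 + (j + 1))) = fun j => a (n + 1 + 1 + j) by
      funext j; ring_nf, pow_succ]
    push_cast
    rw [add_zero, eq_div_iff (by positivity)]
    field_simp at hstep
    linarith

theorem exists_two_pow_mul_eq_intCast_add_binaryTail (ha : ∀ p, a p ≤ 1)
    (hx : HasSum (fun p => (a p : ℝ) / 2 ^ p) x) (n : ℕ) :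
    ∃ z : ℤ, 2 ^ n * x = z + binaryTail a n := by
  induction n with
  | zero =>
    refine ⟨a 0, ?_⟩
    have hs := (summable_digit_div_two_pow ha 0).tsum_eq_zero_add
    simp only [add_zero] at hs
    rw [hx.tsum_eq] at hs
    rw [hs, pow_zero, one_mul, binaryTail]
    simp [add_comm 1]
  | succ n ih =>
    obtain ⟨z, hz⟩ := ih
    refine ⟨2 * z + a (n + 1), ?_⟩
    rw [pow_succ', mul_assoc, hz, mul_add, two_mul_binaryTail ha]
    push_cast
    ring

theorem fract_two_pow_mul_eq_binaryTail (ha : ∀ p, a p ≤ 1)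
    (hzero : ∀ N, ∃ p, N < p ∧ a p = 0) (hx : HasSum (fun p => (a p : ℝ) / 2 ^ p) x)
    (n : ℕ) : Int.fract (2 ^ n * x) = binaryTail a n := by
  obtain ⟨z, hz⟩ := exists_two_pow_mul_eq_intCast_add_binaryTail ha hx n
  obtain ⟨p, hnp, hp⟩ := hzero n
  rw [hz, Int.fract_intCast_add, Int.fract_eq_self]
  exact ⟨binaryTail_nonneg n,
    binaryTail_lt_one ha (j₀ := p - (n + 1)) (by rwa [Nat.add_sub_cancel' hnp])⟩

theorem fract_two_pow_mul_lt_iff (ha : ∀ p, a p ≤ 1) (hzero : ∀ N, ∃ p, N < p ∧ a p = 0)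
    (hx : HasSum (fun p => (a p : ℝ) / 2 ^ p) x) (n L b : ℕ) :
    Int.fract (2 ^ n * x) < b / 2 ^ L ↔ ofBits (fun j => a (n + 1 + j)) L < b := by
  obtain ⟨p, hnp, hp⟩ := hzero (n + L)
  have hτ := binaryTail_lt_one ha (n := n + L) (j₀ := p - (n + L + 1))
    (by rwa [Nat.add_sub_cancel' hnp])
  rw [fract_two_pow_mul_eq_binaryTail ha hzero hx, binaryTail_eq_ofBits_add ha L,
    div_lt_div_iff_of_pos_right (by positivity)]
  constructor
  · intro h
    exact_mod_cast (le_add_of_nonneg_right (binaryTail_nonneg _)).trans_lt h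
  · intro h
    have : (ofBits (fun j => a (n + 1 + j)) L : ℝ) + 1 ≤ b := by exact_mod_cast h
    linarith

end BinaryExpansion

def submaskParity (c n : ℕ) : ℕ :=
  (∑ j ∈ range (c + 1) with j &&& c = j, n / 2 ^ j % 2) % 2

theorem levinD_two_pow_sub_succ {m c : ℕ} (hc : c < 2 ^ m) (n : ℕ) :
    levinD m (2 ^ m - (c + 1)) n = submaskParity c n := by
  unfold levinD submaskParity
  congr 1
  rw [sum_filter, sum_subset (range_subset_range.mpr (show c + 1 ≤ 2 ^ m by omega))]
  · refine sum_congr rfl fun j hj => ?_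
    simp only [Nat.choose_add_mod_two, Nat.and_two_pow_sub_succ_eq_zero_iff hc (mem_range.mp hj),
      ite_mul, one_mul, zero_mul]
  · intro j _ hj
    have : j &&& c ≠ j := by
      have := @Nat.and_le_right j c
      simp only [mem_range] at hj
      omega
    simp [this]

theorem submaskParity_eq (c n : ℕ) :
    submaskParity c n
      = (n / 2 ^ c % 2 + ∑ j ∈ range c with j &&& c = j, n / 2 ^ j % 2) % 2 := by
  rw [submaskParity, sum_filter, sum_filter, sum_range_succ, if_pos (Nat.and_self c), add_comm]

theorem mod_two_pow_eq_of_submaskParity_eq {n₁ n₂ s t : ℕ} (hs : n₁ % 2 ^ s = n₂ % 2 ^ s)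
    (h : ∀ c, s ≤ c → c < t → submaskParity c n₁ = submaskParity c n₂) :
    n₁ % 2 ^ t = n₂ % 2 ^ t := by
  induction t with
  | zero => simp [Nat.mod_one]
  | succ t ih =>
    by_cases hst : t + 1 ≤ s
    · rw [← Nat.mod_mod_of_dvd n₁ (pow_dvd_pow 2 hst), hs,
        Nat.mod_mod_of_dvd _ (pow_dvd_pow 2 hst)]
    have ht := ih fun c hsc hct => h c hsc (by omega)
    have hlow : ∑ j ∈ range t with j &&& t = j, n₁ / 2 ^ j % 2
        = ∑ j ∈ range t with j &&& t = j, n₂ / 2 ^ j % 2 := by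
      refine sum_congr rfl fun j hj => ?_
      have hjt : j < t := (mem_range.mp (mem_filter.mp hj).1)
      rw [← Nat.mod_two_pow_div_two_pow_mod_two hjt, ht, Nat.mod_two_pow_div_two_pow_mod_two hjt]
    have hbit := h t (by omega) (by omega)
    rw [submaskParity_eq, submaskParity_eq, hlow] at hbit
    have hbit' : n₁ / 2 ^ t % 2 = n₂ / 2 ^ t % 2 := by omega
    rw [Nat.mod_pow_succ, Nat.mod_pow_succ, ht, hbit']

theorem levinD_le_one (m k n : ℕ) : levinD m k n ≤ 1 :=
  Nat.le_of_lt_succ (Nat.mod_lt _ two_pos)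

theorem levinD_zero_right (m k : ℕ) : levinD m k 0 = 0 := by
  simp [levinD]

/-- Digit `q` of block `A_m`, reading its words cyclically: past the end of the block it returns
the zero word, which is also how the next block `A_{m+1}` begins. -/
def blockDigit (m q : ℕ) : ℕ := levinD m (q % 2 ^ m) (q / 2 ^ m % 2 ^ 2 ^ m)

def blockWindow (m q : ℕ) : ℕ := ofBits (fun j => blockDigit m (q + j)) (2 ^ m)

theorem blockDigit_mul_add {m k : ℕ} (hk : k < 2 ^ m) (n : ℕ) :
    blockDigit m (2 ^ m * n + k) = levinD m k (n % 2 ^ 2 ^ m) := by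
  rw [blockDigit, Nat.mul_add_mod, Nat.mod_eq_of_lt hk, Nat.mul_add_div (by positivity),
    Nat.div_eq_of_lt hk, add_zero]

theorem blockWindow_lt (m q : ℕ) : blockWindow m q < 2 ^ 2 ^ m :=
  ofBits_lt fun _ _ => levinD_le_one _ _ _

theorem blockDigit_eq_zero_of_lt {m q : ℕ} (hq : q < 2 ^ m) : blockDigit m q = 0 := by
  rw [blockDigit, Nat.div_eq_of_lt hq, Nat.zero_mod, levinD_zero_right]

theorem blockWindow_mul_add_injOn {m k : ℕ} (hk : k < 2 ^ m) :
    Set.InjOn (fun n => blockWindow m (2 ^ m * n + k)) (range (2 ^ 2 ^ m)) := by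
  intro n₁ h₁ n₂ h₂ h
  simp only [coe_range, Set.mem_Iio] at h₁ h₂
  have hdigit :
      ∀ j < 2 ^ m, blockDigit m (2 ^ m * n₁ + k + j) = blockDigit m (2 ^ m * n₂ + k + j) :=
    eq_of_ofBits_eq (fun _ _ => levinD_le_one _ _ _) (fun _ _ => levinD_le_one _ _ _) h
  have hcur : ∀ c < 2 ^ m - k, submaskParity c n₁ = submaskParity c n₂ := by
    intro c hc
    have := hdigit (2 ^ m - (c + 1) - k) (by omega)
    simp only [add_assoc, show k + (2 ^ m - (c + 1) - k) = 2 ^ m - (c + 1) by omega] at this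
    rwa [blockDigit_mul_add (by omega), blockDigit_mul_add (by omega), Nat.mod_eq_of_lt h₁,
      Nat.mod_eq_of_lt h₂, levinD_two_pow_sub_succ (by omega),
      levinD_two_pow_sub_succ (by omega)] at this
  have hnext : ∀ c, 2 ^ m - k ≤ c → c < 2 ^ m →
      submaskParity c ((n₁ + 1) % 2 ^ 2 ^ m) = submaskParity c ((n₂ + 1) % 2 ^ 2 ^ m) := by
    intro c hc hcm
    have := hdigit (2 ^ m - k + (2 ^ m - (c + 1))) (by omega)
    have hpos (n : ℕ) : 2 ^ m * n + k + (2 ^ m - k + (2 ^ m - (c + 1)))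
        = 2 ^ m * (n + 1) + (2 ^ m - (c + 1)) := by rw [mul_add_one]; omega
    rwa [hpos, hpos, blockDigit_mul_add (by omega), blockDigit_mul_add (by omega),
      levinD_two_pow_sub_succ (by omega), levinD_two_pow_sub_succ (by omega)] at this
  have hlow : n₁ % 2 ^ (2 ^ m - k) = n₂ % 2 ^ (2 ^ m - k) :=
    mod_two_pow_eq_of_submaskParity_eq (s := 0) (by rw [pow_zero, Nat.mod_one, Nat.mod_one])
      fun c _ hc => hcur c hc
  have hdvd : 2 ^ (2 ^ m - k) ∣ 2 ^ 2 ^ m := pow_dvd_pow 2 (by omega)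
  have hnext_low : (n₁ + 1) % 2 ^ 2 ^ m % 2 ^ (2 ^ m - k)
      = (n₂ + 1) % 2 ^ 2 ^ m % 2 ^ (2 ^ m - k) := by
    rw [Nat.mod_mod_of_dvd _ hdvd, Nat.mod_mod_of_dvd _ hdvd, Nat.add_mod, hlow, ← Nat.add_mod]
  have hsucc := mod_two_pow_eq_of_submaskParity_eq hnext_low hnext
  rw [Nat.mod_mod, Nat.mod_mod] at hsucc
  exact Nat.ModEq.eq_of_lt_of_lt (Nat.ModEq.add_right_cancel' 1 hsucc) h₁ h₂

theorem card_blockWindow_mul_add_lt {m k b : ℕ} (hk : k < 2 ^ m) (hb : b ≤ 2 ^ 2 ^ m) :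
    #{n ∈ range (2 ^ 2 ^ m) | blockWindow m (2 ^ m * n + k) < b} = b := by
  have hinj := blockWindow_mul_add_injOn hk
  have himage : (range (2 ^ 2 ^ m)).image (fun n => blockWindow m (2 ^ m * n + k))
      = range (2 ^ 2 ^ m) :=
    eq_of_subset_of_card_le (image_subset_iff.mpr fun n _ => mem_range.mpr (blockWindow_lt _ _))
      (card_image_of_injOn hinj).ge
  rw [← card_image_of_injOn (hinj.mono (filter_subset _ _)), ← filter_image (p := (· < b)),
    himage,     show {v ∈ range (2 ^ 2 ^ m) | v < b} = range b by ext; simp; omega, card_range]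

theorem card_blockWindow_lt {m b : ℕ} (hb : b ≤ 2 ^ 2 ^ m) :
    #{q ∈ range (2 ^ m * 2 ^ 2 ^ m) | blockWindow m q < b} = 2 ^ m * b := by
  rw [card_filter, sum_range_mul, sum_comm]
  simp only [← card_filter]
  rw [sum_congr rfl fun k hk => card_blockWindow_mul_add_lt (mem_range.mp hk) hb, sum_const,
    card_range, smul_eq_mul]

theorem levinN_succ {m : ℕ} (hm : 1 ≤ m) : levinN (m + 1) = levinN m + 2 ^ m * 2 ^ 2 ^ m :=
  sum_Ico_succ_top hm _

theorem levinN_mono : Monotone levinN := fun _ _ h =>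
  sum_le_sum_of_subset (Ico_subset_Ico le_rfl h)

theorem strictMono_levinN_succ : StrictMono fun K => levinN (K + 1) :=
  strictMono_nat_of_lt_succ fun K => by
    rw [levinN_succ (Nat.le_add_left 1 K)]
    exact Nat.lt_add_of_pos_right (by positivity)

noncomputable def levinBlockIndex (p : ℕ) : ℕ := sInf {m | p ≤ levinN (m + 1)}

/-- The digit of `α` of weight `2^{-p}`; block `A_m` occupies positions `n_m + 1, …, n_{m+1}`. -/
noncomputable def levinDigit (p : ℕ) : ℕ :=
  blockDigit (levinBlockIndex p) (p - levinN (levinBlockIndex p) - 1)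

theorem levinBlockIndex_levinN_add {m q : ℕ} (hm : 1 ≤ m) (hq : q < 2 ^ m * 2 ^ 2 ^ m) :
    levinBlockIndex (levinN m + q + 1) = m := by
  have hmem : m ∈ {m' | levinN m + q + 1 ≤ levinN (m' + 1)} := by
    simp only [Set.mem_ofPred_eq, levinN_succ hm]
    omega
  refine le_antisymm (Nat.sInf_le hmem) (le_csInf ⟨m, hmem⟩ fun m' hm' => ?_)
  by_contra! h
  have := levinN_mono (show m' + 1 ≤ m by omega)
  simp only [Set.mem_ofPred_eq] at hm'
  omega

theorem levinDigit_levinN_add {m q : ℕ} (hm : 1 ≤ m) (hq : q < 2 ^ m * 2 ^ 2 ^ m) :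
    levinDigit (levinN m + q + 1) = blockDigit m q := by
  rw [levinDigit, levinBlockIndex_levinN_add hm hq,
    show levinN m + q + 1 - levinN m - 1 = q by omega]

theorem levinDigit_le_one (p : ℕ) : levinDigit p ≤ 1 := levinD_le_one _ _ _

theorem levinDigit_zero : levinDigit 0 = 0 := by
  rw [levinDigit, Nat.zero_sub, Nat.zero_sub]
  exact blockDigit_eq_zero_of_lt (by positivity)

theorem exists_levinDigit_eq_zero (N : ℕ) : ∃ p, N < p ∧ levinDigit p = 0 := by
  refine ⟨levinN (N + 1) + 0 + 1, Nat.lt_succ_of_le (strictMono_levinN_succ.id_le N), ?_⟩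
  rw [levinDigit_levinN_add (m := N + 1) (q := 0) (by omega) (by positivity),
    blockDigit_eq_zero_of_lt (by positivity)]

theorem levinDigit_levinN_add_add {m q j : ℕ} (hm : 1 ≤ m) (hq : q < 2 ^ m * 2 ^ 2 ^ m)
    (hj : j < 2 ^ m) : levinDigit (levinN m + q + 1 + j) = blockDigit m (q + j) := by
  by_cases hqj : q + j < 2 ^ m * 2 ^ 2 ^ m
  · rw [add_right_comm, add_assoc (levinN m), levinDigit_levinN_add hm hqj]
  · obtain ⟨r, hr, hqr⟩ : ∃ r < 2 ^ m, q + j = 2 ^ m * 2 ^ 2 ^ m + r :=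
      ⟨q + j - 2 ^ m * 2 ^ 2 ^ m, by omega, by omega⟩
    have hM : 2 ^ m ≤ 2 ^ (m + 1) := Nat.pow_le_pow_right two_pos m.le_succ
    have hr' : r < 2 ^ (m + 1) * 2 ^ 2 ^ (m + 1) :=
      hr.trans_le (hM.trans (Nat.le_mul_of_pos_right _ (by positivity)))
    rw [show levinN m + q + 1 + j = levinN (m + 1) + r + 1 by rw [levinN_succ hm]; omega,
      levinDigit_levinN_add (by omega) hr',
      blockDigit_eq_zero_of_lt (hr.trans_le hM), hqr,
      blockDigit_mul_add hr, Nat.mod_self, levinD_zero_right]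

theorem ofBits_levinDigit {m q : ℕ} (hm : 1 ≤ m) (hq : q < 2 ^ m * 2 ^ 2 ^ m) :
    ofBits (fun j => levinDigit (levinN m + q + 1 + j)) (2 ^ m) = blockWindow m q :=
  sum_congr rfl fun j hj =>
    congrArg (· * 2 ^ (2 ^ m - 1 - j)) (levinDigit_levinN_add_add hm hq (mem_range.mp hj))

theorem sum_levinD_div_two_pow {m : ℕ} (hm : 1 ≤ m) :
    ∑ n ∈ range (2 ^ 2 ^ m), ∑ k ∈ range (2 ^ m),
        (levinD m k n : ℝ) / 2 ^ (levinN m + 2 ^ m * n + k + 1)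
      = ∑ q ∈ range (2 ^ m * 2 ^ 2 ^ m),
        (levinDigit (levinN m + 1 + q) : ℝ) / 2 ^ (levinN m + 1 + q) := by
  rw [sum_range_mul]
  refine sum_congr rfl fun n hn => sum_congr rfl fun k hk => ?_
  have hq : 2 ^ m * n + k < 2 ^ m * 2 ^ 2 ^ m := by
    have := Nat.mul_le_mul_left (2 ^ m) (mem_range.mp hn)
    rw [Nat.mul_succ] at this
    have := mem_range.mp hk
    omega
  rw [show levinN m + 1 + (2 ^ m * n + k) = levinN m + (2 ^ m * n + k) + 1 by omega,
    levinDigit_levinN_add hm hq, blockDigit_mul_add (mem_range.mp hk),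
    Nat.mod_eq_of_lt (mem_range.mp hn), add_assoc (levinN m)]

theorem sum_range_levinAlpha_blocks (K : ℕ) :
    ∑ i ∈ range K, ∑ n ∈ range (2 ^ 2 ^ (i + 1)), ∑ k ∈ range (2 ^ (i + 1)),
        (levinD (i + 1) k n : ℝ) / 2 ^ (levinN (i + 1) + 2 ^ (i + 1) * n + k + 1)
      = ∑ p ∈ range (levinN (K + 1) + 1), (levinDigit p : ℝ) / 2 ^ p := by
  induction K with
  | zero => simp [levinN, levinDigit_zero]
  | succ K ih =>
    rw [sum_range_succ, ih, sum_levinD_div_two_pow (Nat.le_add_left 1 K), ← sum_range_add,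
      levinN_succ (Nat.le_add_left 1 K), add_right_comm]

theorem hasSum_levinDigit : HasSum (fun p => (levinDigit p : ℝ) / 2 ^ p) levinAlpha := by
  have hf : Summable fun p => (levinDigit p : ℝ) / 2 ^ p := by
    simpa using summable_digit_div_two_pow levinDigit_le_one 0
  convert hf.hasSum using 1
  refine ((hasSum_iff_tendsto_nat_of_nonneg (fun i => by positivity) _).mpr ?_).tsum_eq
  simpa only [Function.comp_def, sum_range_levinAlpha_blocks] using
    hf.hasSum.tendsto_sum_nat.comp (strictMono_levinN_succ.add_const 1).tendsto_atTop

theorem fract_two_pow_levinN_add_mul_lt_iff {m q : ℕ} (hm : 1 ≤ m) (hq : q < 2 ^ m * 2 ^ 2 ^ m)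
    (b : ℕ) : Int.fract (2 ^ (levinN m + q) * levinAlpha) < (b : ℝ) / 2 ^ 2 ^ m ↔
      blockWindow m q < b := by
  rw [fract_two_pow_mul_lt_iff levinDigit_le_one exists_levinDigit_eq_zero hasSum_levinDigit,
    ofBits_levinDigit hm hq]

theorem card_fract_two_pow_mul_levinAlpha_lt {m b : ℕ} (hm : 1 ≤ m) (hb : b ≤ 2 ^ 2 ^ m) :
    #{n ∈ Ico (levinN m) (levinN m + 2 ^ m * 2 ^ 2 ^ m) |
      Int.fract (2 ^ n * levinAlpha) < (b : ℝ) / 2 ^ 2 ^ m} = 2 ^ m * b := by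
  rw [← card_blockWindow_lt hb, card_filter, card_filter, sum_Ico_eq_sum_range,
    Nat.add_sub_cancel_left]
  refine sum_congr rfl fun q hq => ?_
  simp only [fract_two_pow_levinN_add_mul_lt_iff hm (mem_range.mp hq)]

/-- For every `m ≥ 1` and `0 ≤ γ < 1`:
`|#{n_m ≤ n < n_m + 2^m 2^{2^m} : {2^n α} ∈ [0,γ)} − γ 2^m 2^{2^m}| < 5 · 2^m`. -/
theorem levin_block_count (m : ℕ) (hm : 1 ≤ m) (γ : ℝ) (hγ0 : 0 ≤ γ) (hγ1 : γ < 1) :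
    |(((Finset.Ico (levinN m) (levinN m + 2 ^ m * 2 ^ 2 ^ m)).filter
        (fun n => Int.fract (2 ^ n * levinAlpha) ∈ Set.Ico (0 : ℝ) γ)).card : ℝ)
      - γ * 2 ^ m * 2 ^ 2 ^ m| < 5 * 2 ^ m := by
  set S := (Finset.Ico (levinN m) (levinN m + 2 ^ m * 2 ^ 2 ^ m)).filter
    (fun n => Int.fract (2 ^ n * levinAlpha) ∈ Set.Ico (0 : ℝ) γ)
  set a := ⌊γ * 2 ^ 2 ^ m⌋₊
  have ha : (a : ℝ) ≤ γ * 2 ^ 2 ^ m := Nat.floor_le (by positivity)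
  have ha' : γ * 2 ^ 2 ^ m < a + 1 := Nat.lt_floor_add_one _
  have haT : a < 2 ^ 2 ^ m := (Nat.floor_lt (by positivity)).mpr
    (by push_cast; exact mul_lt_of_lt_one_left (by positivity) hγ1)
  have hlower : 2 ^ m * a ≤ #S := by
    rw [← card_fract_two_pow_mul_levinAlpha_lt hm haT.le]
    refine card_le_card (monotone_filter_right _ fun n _ hn => ⟨Int.fract_nonneg _, ?_⟩)
    exact hn.trans_le ((div_le_iff₀ (by positivity)).mpr ha)
  have hupper : #S ≤ 2 ^ m * (a + 1) := by
    rw [← card_fract_two_pow_mul_levinAlpha_lt hm haT]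
    refine card_le_card (monotone_filter_right _ fun n _ hn => hn.2.trans ?_)
    rw [lt_div_iff₀ (by positivity)]
    exact_mod_cast ha'
  have hM : (0 : ℝ) < 2 ^ m := by positivity
  have hlower' : (2 : ℝ) ^ m * a ≤ #S := by exact_mod_cast hlower
  have hupper' : (#S : ℝ) ≤ 2 ^ m * (a + 1) := by exact_mod_cast hupper
  rw [abs_lt]
  constructor <;> nlinarith
end

section
/- Fix an integer m ≥ 1 and let k, t be integers with 0 ≤ k < 2^m, 1 ≤ t ≤ 2^m and k + t ≤ 2^m − 1. Then, over 𝔽₂, the row vector c_{k+t,t} equals ξ_t · A_{k,t}; that is, for every l with 0 ≤ l < t one has binom(k+t+l, l) ≡ ∑_{j=0}^{t−1} binom(t, j)·binom(k+j+l, l) (mod 2). -/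
/-!
Modulo 2 the claim says that `∑_{j ≤ t} binom(t, j) f(j)` is even for `f(j) = binom(j + k + l, l)`.
Up to signs, which disappear mod 2, this sum is the `t`-th forward difference of `f` at `0`;
`f` is a shift of `x ↦ binom(x, l)`, whose `l`-th forward difference is constant, so its
`t`-th one vanishes once `l < t`.
-/

open Finset fwdDiff

theorem fwdDiff_iter_choose_eq_zero_of_lt {l n : ℕ} (h : l < n) :
    Δ_[1] ^[n] (fun x ↦ x.choose l : ℕ → ℤ) = 0 := by
  obtain ⟨d, rfl⟩ := Nat.exists_eq_add_of_lt h
  have hl : Δ_[1] ^[l] (fun x ↦ x.choose l : ℕ → ℤ) = fun _ ↦ 1 := by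
    simpa using fwdDiff_iter_choose 0 l
  rw [show l + d + 1 = (d + 1) + l by omega, Function.iterate_add_apply, hl,
    Function.iterate_succ_apply, fwdDiff_const]
  exact funext fun _ ↦ by simp [fwdDiff_iter_eq_sum_shift]

theorem alternating_sum_choose_mul_choose_add_eq_zero {l n : ℕ} (h : l < n) (a : ℕ) :
    ∑ j ∈ range (n + 1), (-1 : ℤ) ^ (n - j) * n.choose j * (j + a).choose l = 0 := by
  have := fwdDiff_iter_comp_add 1 (fun x ↦ x.choose l : ℕ → ℤ) a n 0
  rw [fwdDiff_iter_choose_eq_zero_of_lt h, fwdDiff_iter_eq_sum_shift] at this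
  simpa using this

theorem sum_choose_mul_choose_add_modEq_zero {l n : ℕ} (h : l < n) (a : ℕ) :
    ∑ j ∈ range (n + 1), n.choose j * (j + a).choose l ≡ 0 [MOD 2] := by
  rw [← ZMod.natCast_eq_natCast_iff]
  simpa [CharTwo.neg_eq] using
    congrArg (Int.cast : ℤ → ZMod 2) (alternating_sum_choose_mul_choose_add_eq_zero h a)

theorem c_row_eq_xi_mul_A_general (k t : ℕ) :
    ∀ l < t, Nat.choose (k + t + l) l ≡
      (∑ j ∈ Finset.range t, Nat.choose t j * Nat.choose (k + j + l) l) [MOD 2] := by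
  intro l hl
  have hsum := sum_choose_mul_choose_add_modEq_zero hl (k + l)
  rw [sum_range_succ, Nat.choose_self, one_mul, ← ZMod.natCast_eq_natCast_iff] at hsum
  simp only [show ∀ j, k + j + l = j + (k + l) from fun j ↦ by omega]
  rw [← ZMod.natCast_eq_natCast_iff, eq_comm]
  push_cast at hsum ⊢
  exact CharTwo.add_eq_zero.mp hsum

/-- Over `𝔽₂`, `c_{k+t,t} = ξ_t · A_{k,t}`: for `m ≥ 1`, `0 ≤ k < 2^m`,
`1 ≤ t ≤ 2^m` with `k + t ≤ 2^m − 1`, and every `0 ≤ l < t`,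
`binom(k+t+l, l) ≡ ∑_{j=0}^{t−1} binom(t,j)·binom(k+j+l, l) (mod 2)`. -/
theorem c_row_eq_xi_mul_A (m k t : ℕ) (hm : 1 ≤ m) (hk : k < 2 ^ m)
    (ht1 : 1 ≤ t) (ht2 : t ≤ 2 ^ m) (hkt : k + t ≤ 2 ^ m - 1) :
    ∀ l < t, Nat.choose (k + t + l) l ≡
      (∑ j ∈ Finset.range t, Nat.choose t j * Nat.choose (k + j + l) l) [MOD 2] :=
  c_row_eq_xi_mul_A_general k t
end

section
/- Fix an integer m ≥ 1 and let k, t be integers with 0 ≤ k < 2^m, 1 ≤ t ≤ 2^m and k + t ≤ 2^m − 1. Then, over 𝔽₂, the row vector d_{k+t,t} equals ξ_t · B_{k,t} + c_{k+t,2^m−t}; that is, for every l with t ≤ l < 2^m one has binom(k+t+l, l) ≡ ∑_{j=0}^{t−1} binom(t, j)·binom(k+j+l, l) + binom(k+l, l−t) (mod 2). -/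
/-! The sum `∑_{j ≤ t} (-1)^(t-j) binom(t,j) binom(n+j, l)` is the `t`-th forward difference of
`n ↦ binom(n, l)`, which is `n ↦ binom(n, l-t)`; mod 2 the signs disappear. Taking `n = k + l`
and moving the `j = t` term to the other side gives the theorem. -/

open Finset

theorem sum_neg_one_pow_mul_choose_mul_choose_add {t l : ℕ} (h : t ≤ l) (n : ℕ) :
    ∑ j ∈ range (t + 1), (-1 : ℤ) ^ (t - j) * t.choose j * (n + j).choose l
      = n.choose (l - t) := by
  have hΔ := congrFun (fwdDiff_iter_choose (l - t) t) n
  rw [Nat.add_sub_cancel' h, fwdDiff_iter_eq_sum_shift] at hΔ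
  simpa using hΔ

theorem sum_choose_mul_choose_add_zmod_two {t l : ℕ} (h : t ≤ l) (n : ℕ) :
    ∑ j ∈ range (t + 1), (t.choose j * (n + j).choose l : ZMod 2) = n.choose (l - t) := by
  have hℤ := congrArg (Int.cast : ℤ → ZMod 2) (sum_neg_one_pow_mul_choose_mul_choose_add h n)
  push_cast [ZMod.neg_eq_self_mod_two] at hℤ
  simpa using hℤ

theorem d_row_eq_xi_mul_B_add_c_general (m k t : ℕ) :
    ∀ l, t ≤ l → l < 2 ^ m → Nat.choose (k + t + l) l ≡
      (∑ j ∈ Finset.range t, Nat.choose t j * Nat.choose (k + j + l) l)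
        + Nat.choose (k + l) (l - t) [MOD 2] := by
  intro l hl _
  have h := sum_choose_mul_choose_add_zmod_two hl (k + l)
  rw [sum_range_succ, Nat.choose_self, Nat.cast_one, one_mul] at h
  simp_rw [add_right_comm k l] at h
  rw [← ZMod.natCast_eq_natCast_iff]
  push_cast
  rw [← h, ← add_assoc, CharTwo.add_self_eq_zero, zero_add]

/-- Over `𝔽₂`, `d_{k+t,t} = ξ_t · B_{k,t} + c_{k+t,2^m−t}`: for `m ≥ 1`,
`0 ≤ k < 2^m`, `1 ≤ t ≤ 2^m` with `k + t ≤ 2^m − 1`, and every `t ≤ l < 2^m`,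
`binom(k+t+l, l) ≡ ∑_{j=0}^{t−1} binom(t,j)·binom(k+j+l, l) + binom(k+l, l−t) (mod 2)`. -/
theorem d_row_eq_xi_mul_B_add_c (m k t : ℕ) (hm : 1 ≤ m) (hk : k < 2 ^ m)
    (ht1 : 1 ≤ t) (ht2 : t ≤ 2 ^ m) (hkt : k + t ≤ 2 ^ m - 1) :
    ∀ l, t ≤ l → l < 2 ^ m → Nat.choose (k + t + l) l ≡
      (∑ j ∈ Finset.range t, Nat.choose t j * Nat.choose (k + j + l) l)
        + Nat.choose (k + l) (l - t) [MOD 2] :=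
  d_row_eq_xi_mul_B_add_c_general m k t
end

section
/- For all nonnegative integers t, k, l one has ∑_{j=0}^{t} binom(t, j)·binom(k+l+j, l) ≡ binom(k+l, l−t) (mod 2), where the binomial coefficient binom(a, b) is understood to be 0 when b < 0 (so in particular the left-hand side is even whenever l < t). -/
/-!
Over any commutative semiring, the binomial theorem gives
`∑ⱼ binom(t, j) (X + 1)^(n + j) = (X + 1)^n (X + 2)^t`, and the coefficient of `X^l` on the
left is `∑ⱼ binom(t, j) binom(n + j, l)`. Modulo 2 the right-hand side is `(X + 1)^n X^t`,
whose coefficient of `X^l` is `binom(n, l - t)` for `t ≤ l` and `0` otherwise.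
-/

open Polynomial Finset

theorem Polynomial.sum_choose_mul_X_add_one_pow {R : Type*} [CommSemiring R] (n t : ℕ) :
    ∑ j ∈ range (t + 1), (t.choose j : R[X]) * (X + 1) ^ (n + j) = (X + 1) ^ n * (X + 2) ^ t := by
  have h : (X + 2 : R[X]) = (X + 1) + 1 := by rw [add_assoc, one_add_one_eq_two]
  rw [h, add_pow (X + 1 : R[X]) 1 t, mul_sum]
  refine sum_congr rfl fun j _ => ?_
  rw [one_pow, pow_add]
  ring

theorem Polynomial.natCast_sum_choose_mul_choose {R : Type*} [CommSemiring R] (n t l : ℕ) :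
    ((∑ j ∈ range (t + 1), t.choose j * (n + j).choose l : ℕ) : R) =
      ((X + 1) ^ n * (X + 2) ^ t : R[X]).coeff l := by
  rw [← sum_choose_mul_X_add_one_pow, finsetSum_coeff]
  push_cast
  simp only [← C_eq_natCast, coeff_C_mul, coeff_X_add_one_pow]

/-- For all nonnegative integers `t, k, l`:
`∑_{j=0}^{t} binom(t,j)·binom(k+l+j, l) ≡ binom(k+l, l−t) (mod 2)`,
where `binom(a,b) = 0` when `b < 0` (so the right-hand side is `0` when `l < t`). -/
theorem sum_choose_mul_choose_mod_two (t k l : ℕ) :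
    (∑ j ∈ Finset.range (t + 1), Nat.choose t j * Nat.choose (k + l + j) l) ≡
      (if t ≤ l then Nat.choose (k + l) (l - t) else 0) [MOD 2] := by
  rw [← ZMod.natCast_eq_natCast_iff, natCast_sum_choose_mul_choose,
    CharTwo.two_eq_zero (R := (ZMod 2)[X]), add_zero, mul_comm, coeff_X_pow_mul', coeff_X_add_one_pow]
  split_ifs <;> simp
end

section
/- For all nonnegative integers t, k and every l with 0 ≤ l ≤ t − 1 one has ∑_{j=0}^{t} binom(t, j)·binom(k+l+j, l) ≡ 0 (mod 2). -/
/-!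
The sum is the coefficient of `X ^ l` in
`(X + 1) ^ (k + l) * ∑ j, binom(t, j) (X + 1) ^ j = (X + 1) ^ (k + l) * (X + 2) ^ t`.
Modulo 2 this polynomial is `(X + 1) ^ (k + l) * X ^ t`, which has no monomials of degree
below `t`.
-/

open Polynomial Finset

theorem Polynomial.coeff_X_add_one_pow_mul_X_add_two_pow {R : Type*} [CommSemiring R]
    (m t l : ℕ) :
    ((X + 1) ^ m * (X + 2) ^ t : R[X]).coeff l =
      ((∑ j ∈ range (t + 1), t.choose j * (m + j).choose l : ℕ) : R) := by
  have binomial : (X + 2 : R[X]) ^ t = ∑ j ∈ range (t + 1), (X + 1) ^ j * (t.choose j : R[X]) := by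
    rw [show (X + 2 : R[X]) = (X + 1) + 1 by rw [add_assoc, one_add_one_eq_two], add_pow]
    simp only [one_pow, mul_one]
  simp only [binomial, mul_sum, ← mul_assoc, ← pow_add, finsetSum_coeff, coeff_mul_natCast,
    coeff_X_add_one_pow]
  push_cast
  exact sum_congr rfl fun j _ => mul_comm _ _

/-- For all nonnegative integers `t, k` and every `l` with `0 ≤ l ≤ t − 1`:
`∑_{j=0}^{t} binom(t,j)·binom(k+l+j, l) ≡ 0 (mod 2)`. -/
theorem sum_choose_mul_choose_eq_zero_mod_two (t k l : ℕ) (hl : l < t) :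
    (∑ j ∈ Finset.range (t + 1), Nat.choose t j * Nat.choose (k + l + j) l) ≡ 0 [MOD 2] := by
  rw [← ZMod.natCast_eq_natCast_iff, ← coeff_X_add_one_pow_mul_X_add_two_pow,
    CharTwo.two_eq_zero (R := (ZMod 2)[X]), add_zero, coeff_mul_X_pow', if_neg (not_le.2 hl),
    Nat.cast_zero]
end

section
/- For all nonnegative integers t ≥ 1, k and every l ≥ 0 one has ∑_{j=0}^{t−1} binom(t, j)·binom(k+l+j, l) ≡ binom(k+l+t, l) + binom(k+l, l−t) (mod 2), where binom(a, b) is understood to be 0 when b < 0. -/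
/-! With `y = X + 1` in `𝔽₂[X]` the binomial theorem gives
`∑_{j ≤ t} binom(t, j) y^(n+j) = y^n (y + 1)^t = y^n X^t`; removing the `j = t` term and reading off
the coefficient of `X^l` on both sides gives the congruence. -/

open Finset Polynomial

theorem sum_range_succ_choose_mul_pow_add {R : Type*} [CommSemiring R] (y : R) (n t : ℕ) :
    ∑ j ∈ range (t + 1), (t.choose j : R) * y ^ (n + j) = y ^ n * (y + 1) ^ t := by
  rw [add_pow, mul_sum]
  refine sum_congr rfl fun j _ => ?_
  rw [one_pow, mul_one, pow_add]
  ring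

theorem sum_range_choose_mul_pow_add_of_charTwo {R : Type*} [CommRing R] [CharP R 2]
    (y : R) (n t : ℕ) :
    ∑ j ∈ range t, (t.choose j : R) * y ^ (n + j) = y ^ (n + t) + y ^ n * (y + 1) ^ t := by
  have h := sum_range_succ_choose_mul_pow_add y n t
  rw [sum_range_succ, Nat.choose_self, Nat.cast_one, one_mul, CharTwo.add_eq_iff_eq_add] at h
  rw [h, add_comm]

theorem sum_choose_mul_choose_range_mod_two'_general (t k l : ℕ) :
    (∑ j ∈ Finset.range t, Nat.choose t j * Nat.choose (k + l + j) l) ≡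
      Nat.choose (k + l + t) l + (if t ≤ l then Nat.choose (k + l) (l - t) else 0) [MOD 2] := by
  rw [← ZMod.natCast_eq_natCast_iff]
  push_cast
  have hX : (X + 1 + 1 : (ZMod 2)[X]) = X := CharTwo.add_cancel_right X 1
  have h := congrArg (coeff · l)
    (sum_range_choose_mul_pow_add_of_charTwo (X + 1 : (ZMod 2)[X]) (k + l) t)
  simpa only [hX, finsetSum_coeff, coeff_natCast_mul, coeff_add, coeff_X_add_one_pow,
    coeff_mul_X_pow'] using h

/-- For `t ≥ 1`, all `k ≥ 0` and every `l ≥ 0`: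
`∑_{j=0}^{t−1} binom(t,j)·binom(k+l+j, l) ≡ binom(k+l+t, l) + binom(k+l, l−t) (mod 2)`,
where `binom(a,b) = 0` when `b < 0`. -/
theorem sum_choose_mul_choose_range_mod_two' (t k l : ℕ) (ht : 1 ≤ t) :
    (∑ j ∈ Finset.range t, Nat.choose t j * Nat.choose (k + l + j) l) ≡
      Nat.choose (k + l + t) l + (if t ≤ l then Nat.choose (k + l) (l - t) else 0) [MOD 2] :=
  sum_choose_mul_choose_range_mod_two'_general t k l
end

section
/- Fix an integer m ≥ 1 and let k ≥ 0, t ≥ 1 be integers with k + t < 2^m, and assume the matrix A_{k,t} is invertible over 𝔽₂. Let v ≥ 0 be an integer with 8·v < 2^m − t, and let w ∈ 𝔽₂^{2^m − t} be the column vector whose r-th coordinate (0-indexed, r = 0, …, 2^m − t − 1) equals 1 exactly when r ∈ {8, 16, …, 8v}. Then (d_{k+t,t} − c_{k+t,t}·(A_{k,t})^{−1}·B_{k,t}) · w ≡ binom(⌊(k+t)/8⌋ + 1 + v, v) + 1 (mod 2). -/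
open scoped Classical

/-!
Over `𝔽₂` the signs of the `t`-th forward difference disappear, so
`Δᵗ binom(·, r) = binom(·, r - t)` (zero for `r < t`) reads
`∑_{i < t} binom(t, i) binom(n + i, r) = binom(n + t, r) + [t ≤ r] binom(n, r - t)`.
On the columns of `A_{k,t}` and `B_{k,t}` this gives `ξ_t A_{k,t} = c_{k+t,t}`, hence
`c_{k+t,t} A_{k,t}⁻¹ = ξ_t`, and `d_{k+t,t} - ξ_t B_{k,t} = c_{k+t,2^m-t}`.
The dot product with `w` is then `∑_{s=1}^{v} binom(k + t + 8s, 8s)`; by Lucas' theorem each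
term is `binom(⌊(k+t)/8⌋ + s, s)`, and the hockey-stick identity sums these.
-/

open Finset fwdDiff

lemma fwdDiff_iter_choose_apply (k r x : ℕ) :
    (Δ_[1])^[k] (fun y ↦ y.choose r : ℕ → ℤ) x =
      if k ≤ r then x.choose (r - k) else 0 := by
  split_ifs with h
  · obtain ⟨j, rfl⟩ := Nat.exists_eq_add_of_le h
    simp [fwdDiff_iter_choose]
  · obtain ⟨l, rfl⟩ := Nat.exists_eq_add_of_lt (not_le.mp h)
    have hr := fwdDiff_iter_choose 0 r
    rw [add_zero] at hr
    rw [show r + l + 1 = l + 1 + r by ring, Function.iterate_add_apply, hr,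
      Function.iterate_succ_apply]
    simp [Function.iterate_fixed (fwdDiff_const 1 (0 : ℤ))]

lemma sum_range_choose_mul_choose_add (t n r : ℕ) :
    ∑ i ∈ range t, (t.choose i : ZMod 2) * ((n + i).choose r : ZMod 2) =
      (n + t).choose r + if t ≤ r then (n.choose (r - t) : ZMod 2) else 0 := by
  have h := congrArg (Int.cast : ℤ → ZMod 2)
    (fwdDiff_iter_eq_sum_shift 1 (fun y ↦ y.choose r : ℕ → ℤ) t n)
  rw [fwdDiff_iter_choose_apply, sum_range_succ] at h
  push_cast [ZMod.neg_eq_self_mod_two, smul_eq_mul] at h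
  simp only [one_pow, one_mul, mul_one, Nat.choose_self, Nat.cast_one] at h
  rw [h, add_comm _ ((n + t).choose r : ZMod 2), ← add_assoc, CharTwo.add_self_eq_zero, zero_add]

lemma vecMul_choose_row {ι : Type*} (k t : ℕ) (col : ι → ℕ) :
    Matrix.vecMul (fun i : Fin t => (t.choose i : ZMod 2))
        (Matrix.of fun (i : Fin t) j => ((k + i + col j).choose (col j) : ZMod 2)) =
      fun j => ((k + t + col j).choose (col j) : ZMod 2) +
        if t ≤ col j then ((k + col j).choose (col j - t) : ZMod 2) else 0 := by
  funext j
  rw [← add_right_comm, ← sum_range_choose_mul_choose_add, ← Fin.sum_univ_eq_sum_range]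
  simp only [Matrix.vecMul, dotProduct, Matrix.of_apply, add_right_comm]

lemma choose_add_prime_pow_mul_cast (p : ℕ) [Fact p.Prime] (a b e : ℕ) :
    ((a + p ^ e * b).choose (p ^ e * b) : ZMod p) = ((a / p ^ e + b).choose b : ZMod p) := by
  rw [← Int.cast_natCast, ← Int.cast_natCast ((a / p ^ e + b).choose b),
    ZMod.intCast_eq_intCast_iff]
  have hp : 0 < p := (Fact.out : p.Prime).pos
  refine (Choose.choose_modEq_choose_mul_prod_range_choose e).trans ?_
  have hdigits : ∀ i ∈ range e, p ^ e * b / p ^ i % p = 0 := by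
    intro i hi
    obtain ⟨j, rfl⟩ : ∃ j, e = i + 1 + j := ⟨e - i - 1, by rw [mem_range] at hi; omega⟩
    rw [show p ^ (i + 1 + j) * b = p ^ i * (p * (p ^ j * b)) by ring,
      Nat.mul_div_cancel_left _ (pow_pos hp i), Nat.mul_mod_right]
  rw [prod_congr rfl fun i hi => by rw [hdigits i hi, Nat.choose_zero_right], prod_const_one,
    Nat.cast_one, mul_one, Nat.add_mul_div_left _ _ (pow_pos hp e),
    Nat.mul_div_cancel_left _ (pow_pos hp e)]

lemma dotProduct_indicator_Icc_mul {R : Type*} [CommSemiring R] (f : ℕ → R) {c v N : ℕ}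
    (hc : 0 < c) (hv : c * v < N) :
    dotProduct (fun r : Fin N => f r)
        (fun r : Fin N => if ∃ s ∈ Icc 1 v, r.1 = c * s then 1 else 0) =
      ∑ s ∈ Icc 1 v, f (c * s) := by
  rw [dotProduct,
    Fin.sum_univ_eq_sum_range (fun r => f r * if ∃ s ∈ Icc 1 v, r = c * s then 1 else 0)]
  simp only [mul_ite, mul_one, mul_zero]
  rw [← sum_filter, ← sum_image fun x _ y _ h => Nat.eq_of_mul_eq_mul_left hc h]
  congr 1
  ext r
  simp only [mem_filter, mem_range, mem_image]
  constructor
  · rintro ⟨-, s, hs, rfl⟩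
    exact ⟨s, hs, rfl⟩
  · rintro ⟨s, hs, rfl⟩
    exact ⟨lt_of_le_of_lt (Nat.mul_le_mul_left c (mem_Icc.mp hs).2) hv, s, hs, rfl⟩

lemma sum_Icc_one_add_choose (q v : ℕ) :
    ∑ s ∈ Icc 1 v, (q + s).choose s + 1 = (q + 1 + v).choose v := by
  induction v with
  | zero => simp
  | succ v ih =>
    rw [sum_Icc_succ_top (by omega), add_right_comm, ih,
      show q + 1 + (v + 1) = q + 1 + v + 1 by ring, Nat.choose_succ_succ', add_right_comm q,
      add_assoc q v]

theorem d_sub_cAinvB_dotProduct_general (m k t v : ℕ) (hv : 8 * v < 2 ^ m - t)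
    (hA : IsUnit (Matrix.of fun i j : Fin t =>
      ((Nat.choose (k + i.1 + j.1) j.1 : ℕ) : ZMod 2)).det) :
    dotProduct
      ((fun j : Fin (2 ^ m - t) =>
          ((Nat.choose (k + t + (t + j.1)) (t + j.1) : ℕ) : ZMod 2))
        - Matrix.vecMul
            (Matrix.vecMul (fun j : Fin t => ((Nat.choose (k + t + j.1) j.1 : ℕ) : ZMod 2))
              (Matrix.of fun i j : Fin t =>
                ((Nat.choose (k + i.1 + j.1) j.1 : ℕ) : ZMod 2))⁻¹)
            (Matrix.of fun (i : Fin t) (j : Fin (2 ^ m - t)) =>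
              ((Nat.choose (k + i.1 + (t + j.1)) (t + j.1) : ℕ) : ZMod 2)))
      (fun r : Fin (2 ^ m - t) => if ∃ s ∈ Finset.Icc 1 v, r.1 = 8 * s then 1 else 0)
      = ((Nat.choose ((k + t) / 8 + 1 + v) v : ℕ) : ZMod 2) + 1 := by
  have hξA := vecMul_choose_row k t (Fin.val : Fin t → ℕ)
  have hξB := vecMul_choose_row k t (fun j : Fin (2 ^ m - t) => t + j.1)
  simp only [show ∀ j : Fin t, ¬t ≤ j.1 from fun j => not_le.mpr j.2, if_false,
    add_zero] at hξA
  simp only [le_add_iff_nonneg_right, zero_le, if_true, Nat.add_sub_cancel_left] at hξB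
  have hcAinv : Matrix.vecMul (fun j : Fin t => ((k + t + j.1).choose j.1 : ZMod 2))
      (Matrix.of fun i j : Fin t => ((k + i.1 + j.1).choose j.1 : ZMod 2))⁻¹ =
      fun i : Fin t => (t.choose i : ZMod 2) := by
    rw [← hξA, Matrix.vecMul_vecMul, Matrix.mul_nonsing_inv _ hA, Matrix.vecMul_one]
  have hrow : (fun j : Fin (2 ^ m - t) => ((k + t + (t + j.1)).choose (t + j.1) : ZMod 2)) -
      Matrix.vecMul (fun i : Fin t => (t.choose i : ZMod 2))
        (Matrix.of fun (i : Fin t) (j : Fin (2 ^ m - t)) =>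
          ((k + i.1 + (t + j.1)).choose (t + j.1) : ZMod 2)) =
      fun j => ((k + t + j.1).choose j.1 : ZMod 2) := by
    funext j
    rw [hξB, Pi.sub_apply, sub_add_cancel_left, CharTwo.neg_eq, add_assoc]
  have hlucas (s : ℕ) :
      ((k + t + 8 * s).choose (8 * s) : ZMod 2) = (((k + t) / 8 + s).choose s) :=
    choose_add_prime_pow_mul_cast 2 (k + t) s 3
  rw [hcAinv, hrow,
    dotProduct_indicator_Icc_mul (fun r => ((k + t + r).choose r : ZMod 2)) (by norm_num) hv,
    sum_congr rfl fun s _ => hlucas s, ← sum_Icc_one_add_choose]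
  push_cast
  rw [add_assoc, CharTwo.add_self_eq_zero, add_zero]

/-- For `m ≥ 1`, `k ≥ 0`, `t ≥ 1` with `k + t < 2^m` and `A_{k,t}` invertible over
`𝔽₂`, and `v ≥ 0` with `8v < 2^m − t`: if `w ∈ 𝔽₂^{2^m−t}` is the column vector whose
`r`-th coordinate is `1` exactly when `r ∈ {8, 16, …, 8v}`, then
`(d_{k+t,t} − c_{k+t,t}·(A_{k,t})⁻¹·B_{k,t}) · w ≡ binom(⌊(k+t)/8⌋+1+v, v) + 1 (mod 2)`. -/
theorem d_sub_cAinvB_dotProduct (m k t v : ℕ) (hm : 1 ≤ m) (ht : 1 ≤ t)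
    (hkt : k + t < 2 ^ m) (hv : 8 * v < 2 ^ m - t)
    (hA : IsUnit (Matrix.of fun i j : Fin t =>
      ((Nat.choose (k + i.1 + j.1) j.1 : ℕ) : ZMod 2)).det) :
    dotProduct
      ((fun j : Fin (2 ^ m - t) =>
          ((Nat.choose (k + t + (t + j.1)) (t + j.1) : ℕ) : ZMod 2))
        - Matrix.vecMul
            (Matrix.vecMul (fun j : Fin t => ((Nat.choose (k + t + j.1) j.1 : ℕ) : ZMod 2))
              (Matrix.of fun i j : Fin t =>
                ((Nat.choose (k + i.1 + j.1) j.1 : ℕ) : ZMod 2))⁻¹)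
            (Matrix.of fun (i : Fin t) (j : Fin (2 ^ m - t)) =>
              ((Nat.choose (k + i.1 + (t + j.1)) (t + j.1) : ℕ) : ZMod 2)))
      (fun r : Fin (2 ^ m - t) => if ∃ s ∈ Finset.Icc 1 v, r.1 = 8 * s then 1 else 0)
      = ((Nat.choose ((k + t) / 8 + 1 + v) v : ℕ) : ZMod 2) + 1 :=
  d_sub_cAinvB_dotProduct_general m k t v hv hA
end

section
/- For every integer r ≥ 0, the number of pairs (i, j) of integers with 0 ≤ i < 2^r, 0 ≤ j < 2^r and binom(i+1+j, j) odd equals 3^r; in particular it equals the number of pairs (i, j) with 0 ≤ i, j < 2^r and binom(i+j, j) odd. -/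
/-!
By Lucas's theorem modulo 2, `binom(i + j, j)` is odd exactly when adding `i` and `j` in binary
produces no carry. Splitting off the last binary digits therefore multiplies the count of odd
entries by 3 (the last digits may be `00`, `01` or `10`), so it is `3^r` on `[0, 2^r)²`.
Shifting `i` by one trades the row `i = 0` for the row `i = 2^r`, and both rows are entirely odd
(`binom(2^r + j, j)` is odd for `j < 2^r`), so the shifted count is the same.
-/

open Finset

lemma odd_choose_iff_odd_choose_mod_two_and_div_two (n k : ℕ) :
    Odd (n.choose k) ↔ Odd ((n % 2).choose (k % 2)) ∧ Odd ((n / 2).choose (k / 2)) := by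
  rw [← Nat.odd_mul, Nat.odd_iff, Nat.odd_iff,
    (Choose.choose_modEq_choose_mod_mul_choose_div_nat : n.choose k ≡ _ [MOD 2])]

lemma odd_add_choose_iff (m n : ℕ) :
    Odd ((m + n).choose n) ↔ ¬(m % 2 = 1 ∧ n % 2 = 1) ∧ Odd ((m / 2 + n / 2).choose (n / 2)) := by
  rw [odd_choose_iff_odd_choose_mod_two_and_div_two, Nat.add_mod, Nat.add_div two_pos]
  rcases Nat.mod_two_eq_zero_or_one m with hm | hm <;>
    rcases Nat.mod_two_eq_zero_or_one n with hn | hn <;>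
    simp [hm, hn]

lemma odd_two_pow_add_choose {r j : ℕ} (hj : j < 2 ^ r) : Odd ((2 ^ r + j).choose j) := by
  induction r generalizing j with
  | zero => simp_all
  | succ r ih =>
    rw [odd_add_choose_iff, pow_succ, Nat.mul_mod_left, Nat.mul_div_cancel _ two_pos]
    exact ⟨by simp, ih (by omega)⟩

lemma card_filter_range_product_succ_add {P : ℕ → ℕ → Prop} [∀ i j, Decidable (P i j)] (N : ℕ) :
    #{p ∈ range N ×ˢ range N | P (p.1 + 1) p.2} + #{j ∈ range N | P 0 j} =
      #{p ∈ range N ×ˢ range N | P p.1 p.2} + #{j ∈ range N | P N j} := by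
  simp only [card_filter, sum_product]
  rw [← sum_range_succ' (fun i => ∑ j ∈ range N, if P i j then 1 else 0),
    sum_range_succ (fun i => ∑ j ∈ range N, if P i j then 1 else 0)]

lemma card_odd_choose_range_two_mul (n : ℕ) :
    #{p ∈ range (2 * n) ×ˢ range (2 * n) | Odd ((p.1 + p.2).choose p.2)} =
      3 * #{p ∈ range n ×ˢ range n | Odd ((p.1 + p.2).choose p.2)} := by
  have hcarry : #{q ∈ range 2 ×ˢ range 2 | ¬(q.1 = 1 ∧ q.2 = 1)} = 3 := by decide
  rw [← hcarry, ← card_product]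
  refine card_nbij' (fun p => ((p.1 % 2, p.2 % 2), (p.1 / 2, p.2 / 2)))
    (fun q => (2 * q.2.1 + q.1.1, 2 * q.2.2 + q.1.2)) ?_ ?_ ?_ ?_
  · rintro ⟨i, j⟩ h
    simp only [mem_coe, mem_filter, mem_product, mem_range] at h ⊢
    obtain ⟨hno_carry, hodd⟩ := (odd_add_choose_iff i j).1 h.2
    exact ⟨⟨⟨by omega, by omega⟩, hno_carry⟩, ⟨by omega, by omega⟩, hodd⟩
  · rintro ⟨⟨b, d⟩, a, c⟩ h
    simp only [mem_coe, mem_filter, mem_product, mem_range] at h ⊢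
    obtain ⟨⟨⟨hb, hd⟩, hno_carry⟩, ⟨ha, hc⟩, hodd⟩ := h
    rw [odd_add_choose_iff, show (2 * a + b) / 2 = a by omega, show (2 * c + d) / 2 = c by omega]
    exact ⟨⟨by omega, by omega⟩, by omega, hodd⟩
  · rintro ⟨i, j⟩ -
    simp only [Prod.mk.injEq]
    omega
  · rintro ⟨⟨b, d⟩, a, c⟩ h
    simp only [mem_coe, mem_filter, mem_product, mem_range] at h
    simp only [Prod.mk.injEq]
    omega

lemma card_odd_choose_range_two_pow (r : ℕ) :
    #{p ∈ range (2 ^ r) ×ˢ range (2 ^ r) | Odd ((p.1 + p.2).choose p.2)} = 3 ^ r := by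
  induction r with
  | zero => decide
  | succ r ih => rw [pow_succ', card_odd_choose_range_two_mul, ih, pow_succ']

/-- For every `r ≥ 0`, the number of pairs `(i,j)` with `0 ≤ i, j < 2^r` and
`binom(i+1+j, j)` odd equals `3^r`; in particular it equals the number of pairs
with `binom(i+j, j)` odd. -/
theorem count_odd_choose_shifted (r : ℕ) :
    ((Finset.range (2 ^ r) ×ˢ Finset.range (2 ^ r)).filter
      (fun p => Odd (Nat.choose (p.1 + 1 + p.2) p.2))).card = 3 ^ r ∧
    ((Finset.range (2 ^ r) ×ˢ Finset.range (2 ^ r)).filter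
      (fun p => Odd (Nat.choose (p.1 + 1 + p.2) p.2))).card =
    ((Finset.range (2 ^ r) ×ˢ Finset.range (2 ^ r)).filter
      (fun p => Odd (Nat.choose (p.1 + p.2) p.2))).card := by
  have hshift := card_filter_range_product_succ_add (P := fun i j => Odd ((i + j).choose j)) (2 ^ r)
  have hfirst_row : {j ∈ range (2 ^ r) | Odd ((0 + j).choose j)} = range (2 ^ r) :=
    filter_true_of_mem fun j _ => by simp
  have hlast_row : {j ∈ range (2 ^ r) | Odd ((2 ^ r + j).choose j)} = range (2 ^ r) :=
    filter_true_of_mem fun j hj => odd_two_pow_add_choose (mem_range.1 hj)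
  have hshifted_eq : #{p ∈ range (2 ^ r) ×ˢ range (2 ^ r) | Odd ((p.1 + 1 + p.2).choose p.2)} =
      #{p ∈ range (2 ^ r) ×ˢ range (2 ^ r) | Odd ((p.1 + p.2).choose p.2)} := by
    simpa only [hfirst_row, hlast_row, Nat.add_right_cancel_iff] using hshift
  exact ⟨hshifted_eq.trans (card_odd_choose_range_two_pow r), hshifted_eq⟩
end
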